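/- For all integers q ≥ 2 and n ≥ 1, and under each of the scenarios (∗•) and (••), the family 𝓖_q ∪ 𝓛_q is n-cell implementable if and only if q ≤ 2n. -/

import Mathlib

/-- The alphabet 𝔹• = {0, 1, ∗, •}. -/
inductive BB : Type
  | zero
  | one
  | star
  | reject
deriving DecidableEq

instance : Fintype BB where
  elems := {BB.zero, BB.one, BB.star, BB.reject}
  complete := by intro x; cases x <;> simp

/-- The cell function T : 𝔹• × 𝔹• → 𝔹: T(u,ϑ) = 1 iff u = ∗, or ϑ = ∗,
or u,ϑ ∈ 𝔹 with u = ϑ. -/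
def Tcell : BB → BB → Bool
  | BB.star, _ => true
  | _, BB.star => true
  | BB.zero, BB.zero => true
  | BB.one, BB.one => true
  | _, _ => false

/-- The word-level function T(u,ϑ) = ⋀_{j<n} T(u_j, ϑ_j). -/
def Tword {n : ℕ} (u θ : Fin n → BB) : Bool :=
  decide (∀ j, Tcell (u j) (θ j) = true)

/-- The alphabet 𝔹 = {0,1} ⊆ 𝔹•. -/
def Bcirc : Set BB := {BB.zero, BB.one}

/-- The alphabet 𝔹∗ = {0,1,∗} ⊆ 𝔹•. -/
def Bstar : Set BB := {BB.zero, BB.one, BB.star}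

/-- The full alphabet 𝔹•. -/
def Bdot : Set BB := Set.univ

/-- A family Φ of functions {0,…,q−1} → 𝔹 is n-cell implementable under
scenario (A,B) if there are mappings u : {0,…,q−1} → A^n and ϑ : Φ → B^n
with f(x) = T(u(x), ϑ(f)) for all f ∈ Φ and x. -/
def Implementable (A B : Set BB) (n q : ℕ) (Φ : Set (Fin q → Bool)) : Prop :=
  ∃ u : Fin q → Fin n → BB, ∃ θ : (Fin q → Bool) → Fin n → BB,
    (∀ x j, u x j ∈ A) ∧ (∀ f ∈ Φ, ∀ j, θ f j ∈ B) ∧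
    (∀ f ∈ Φ, ∀ x, f x = Tword (u x) (θ f))

/-- The family 𝓔_q = { x ↦ [x = t] : t ∈ [q⟩ }. -/
def Eset (q : ℕ) : Set (Fin q → Bool) :=
  { f | ∃ t : Fin q, f = fun x => decide (x = t) }

/-- The family 𝓝_q = { x ↦ [x ≠ t] : t ∈ [q⟩ }. -/
def Nset (q : ℕ) : Set (Fin q → Bool) :=
  { f | ∃ t : Fin q, f = fun x => decide (x ≠ t) }

/-- The family 𝓖_q = { x ↦ [x ≥ t] : t ∈ [q⟩ }. -/
def Gset (q : ℕ) : Set (Fin q → Bool) :=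
  { f | ∃ t : Fin q, f = fun x => decide (t ≤ x) }

/-- The family 𝓛_q = { x ↦ [x ≤ t] : t ∈ [q⟩ }. -/
def Lset (q : ℕ) : Set (Fin q → Bool) :=
  { f | ∃ t : Fin q, f = fun x => decide (x ≤ t) }

/-!
Lower bound: every `x : Fin q` is the last zero of some member of the family (`[y ≥ x + 1]`, or
`[y ≤ 0]` when `x = q - 1`). A cell of the query rejecting `x` can be re-queried with a binary
symbol that accepts at least as much, and then `x` is the greatest point rejected by this binary
test of this cell. So the tests, pairs in `Fin n × Bool`, determine `x`, and `q ≤ 2 n`.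

Construction: cell `j` carries a bit for the two values `2 j`, `2 j + 1` and `∗` for all others;
a threshold query rejects the cells lying wholly on the wrong side of the threshold and tests the
bit of the cell that the threshold splits.
-/

def BB.ofBool (b : Bool) : BB := if b then BB.one else BB.zero

theorem exists_ofBool_Tcell_eq_false_of_Tcell_eq_false :
    ∀ w v : BB, Tcell w v = false → ∃ b : Bool, Tcell w (BB.ofBool b) = false ∧
      ∀ y, Tcell y v = true → Tcell y (BB.ofBool b) = true := by
  decide

theorem Tword_eq_true_iff {n : ℕ} (u θ : Fin n → BB) :
    Tword u θ = true ↔ ∀ j, Tcell (u j) (θ j) = true := by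
  simp [Tword]

theorem exists_isGreatest_ofBool_mismatch {α : Type*} [LinearOrder α] {n : ℕ}
    {u : α → Fin n → BB} {θ : Fin n → BB} {x : α} (hx : Tword (u x) θ = false)
    (habove : ∀ y, x < y → Tword (u y) θ = true) :
    ∃ p : Fin n × Bool, IsGreatest {y | Tcell (u y p.1) (BB.ofBool p.2) = false} x := by
  obtain ⟨j, hj⟩ : ∃ j, Tcell (u x j) (θ j) = false := by
    simpa [Tword] using hx
  obtain ⟨b, hxb, hb⟩ := exists_ofBool_Tcell_eq_false_of_Tcell_eq_false _ _ hj
  refine ⟨(j, b), hxb, fun y hy => le_of_not_gt fun hxy => ?_⟩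
  have hyb := hb _ ((Tword_eq_true_iff _ _).1 (habove y hxy) j)
  simp_all

theorem exists_mem_Gset_union_Lset_false_true_above {q : ℕ} (hq : 2 ≤ q) (x : Fin q) :
    ∃ f ∈ Gset q ∪ Lset q, f x = false ∧ ∀ y, x < y → f y = true := by
  by_cases hx : (x : ℕ) + 1 < q
  · exact ⟨fun y => decide (⟨x + 1, hx⟩ ≤ y), Or.inl ⟨_, rfl⟩,
      decide_eq_false (Nat.not_succ_le_self x), fun y hy => decide_eq_true hy⟩
  · refine ⟨fun y => decide (y ≤ ⟨0, by omega⟩), Or.inr ⟨_, rfl⟩,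
      decide_eq_false fun h => ?_, fun y hy => absurd y.isLt ?_⟩
    · have hx0 : (x : ℕ) = 0 := by simpa [Fin.le_def] using h
      omega
    · omega

theorem le_two_mul_of_implementable {A B : Set BB} {n q : ℕ} (hq : 2 ≤ q)
    (h : Implementable A B n q (Gset q ∪ Lset q)) : q ≤ 2 * n := by
  obtain ⟨u, θ, -, -, hT⟩ := h
  have hp (x : Fin q) :
      ∃ p : Fin n × Bool, IsGreatest {y | Tcell (u y p.1) (BB.ofBool p.2) = false} x := by
    obtain ⟨f, hf, hfx, hfy⟩ := exists_mem_Gset_union_Lset_false_true_above hq x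
    exact exists_isGreatest_ofBool_mismatch ((hT f hf x).symm.trans hfx)
      fun y hy => (hT f hf y).symm.trans (hfy y hy)
  choose p hp using hp
  have hinj : Function.Injective p := fun x y hxy => (hp x).unique (hxy ▸ hp y)
  simpa [mul_comm] using Fintype.card_le_of_injective p hinj

theorem Implementable.mono {A A' B B' : Set BB} {n q : ℕ} {Φ : Set (Fin q → Bool)}
    (hA : A ⊆ A') (hB : B ⊆ B') (h : Implementable A B n q Φ) : Implementable A' B' n q Φ :=
  let ⟨u, θ, hu, hθ, hT⟩ := h
  ⟨u, θ, fun x j => hA (hu x j), fun f hf j => hB (hθ f hf j), hT⟩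

theorem implementable_of_forall_exists {A B : Set BB} {n q : ℕ} {Φ : Set (Fin q → Bool)}
    (u : Fin q → Fin n → BB) (hu : ∀ x j, u x j ∈ A)
    (hΦ : ∀ f ∈ Φ, ∃ w : Fin n → BB, (∀ j, w j ∈ B) ∧ ∀ x, f x = Tword (u x) w) :
    Implementable A B n q Φ := by
  have hθ (f : Fin q → Bool) :
      ∃ w : Fin n → BB, f ∈ Φ → (∀ j, w j ∈ B) ∧ ∀ x, f x = Tword (u x) w := by
    by_cases hf : f ∈ Φ
    · exact (hΦ f hf).imp fun _ hw _ => hw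
    · exact ⟨fun _ => BB.star, fun hf' => absurd hf' hf⟩
  choose θ hθ using hθ
  exact ⟨u, θ, hu, fun f hf => (hθ f hf).1, fun f hf => (hθ f hf).2⟩

def pairEncoding (n x : ℕ) : Fin n → BB := fun j =>
  if x = 2 * j then BB.zero else if x = 2 * j + 1 then BB.one else BB.star

def geQuery (n t : ℕ) : Fin n → BB := fun j =>
  if 2 * (j : ℕ) + 1 < t then BB.reject else if 2 * (j : ℕ) + 1 = t then BB.one else BB.star

def leQuery (n t : ℕ) : Fin n → BB := fun j =>
  if t < 2 * (j : ℕ) then BB.reject else if t = 2 * (j : ℕ) then BB.zero else BB.star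

theorem pairEncoding_mem_Bstar (n x : ℕ) (j : Fin n) : pairEncoding n x j ∈ Bstar := by
  unfold pairEncoding
  split_ifs <;> simp [Bstar]

theorem Tword_pairEncoding_geQuery {n x : ℕ} (hx : x < 2 * n) (t : ℕ) :
    Tword (pairEncoding n x) (geQuery n t) = decide (t ≤ x) := by
  rw [Tword, decide_eq_decide]
  constructor
  · intro h
    by_contra hxt
    have hcell := h ⟨x / 2, by omega⟩
    simp only [pairEncoding, geQuery] at hcell
    split_ifs at hcell <;> first | omega | exact absurd hcell (by decide)
  · intro htx j
    simp only [pairEncoding, geQuery]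
    split_ifs <;> first | rfl | omega

theorem Tword_pairEncoding_leQuery {n x : ℕ} (hx : x < 2 * n) (t : ℕ) :
    Tword (pairEncoding n x) (leQuery n t) = decide (x ≤ t) := by
  rw [Tword, decide_eq_decide]
  constructor
  · intro h
    by_contra hxt
    have hcell := h ⟨x / 2, by omega⟩
    simp only [pairEncoding, leQuery] at hcell
    split_ifs at hcell <;> first | omega | exact absurd hcell (by decide)
  · intro hxt j
    simp only [pairEncoding, leQuery]
    split_ifs <;> first | rfl | omega

theorem implementable_of_le_two_mul {n q : ℕ} (hqn : q ≤ 2 * n) :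
    Implementable Bstar Bdot n q (Gset q ∪ Lset q) := by
  refine implementable_of_forall_exists (fun x => pairEncoding n x)
    (fun x => pairEncoding_mem_Bstar n x) ?_
  rintro f (⟨t, rfl⟩ | ⟨t, rfl⟩)
  · exact ⟨geQuery n t, fun _ => trivial,
      fun x => (Tword_pairEncoding_geQuery (by omega) t).symm⟩
  · exact ⟨leQuery n t, fun _ => trivial,
      fun x => (Tword_pairEncoding_leQuery (by omega) t).symm⟩

theorem GLset_implementable_starReject_rejectReject_general (q n : ℕ)
    (hq : 2 ≤ q) :
    (Implementable Bstar Bdot n q (Gset q ∪ Lset q) ↔ q ≤ 2 * n) ∧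
    (Implementable Bdot Bdot n q (Gset q ∪ Lset q) ↔ q ≤ 2 * n) :=
  ⟨⟨le_two_mul_of_implementable hq, implementable_of_le_two_mul⟩,
    ⟨le_two_mul_of_implementable hq,
      fun h => (implementable_of_le_two_mul h).mono (Set.subset_univ _) subset_rfl⟩⟩

theorem GLset_implementable_starReject_rejectReject (q n : ℕ)
    (hq : 2 ≤ q) (hn : 1 ≤ n) :
    (Implementable Bstar Bdot n q (Gset q ∪ Lset q) ↔ q ≤ 2 * n) ∧
    (Implementable Bdot Bdot n q (Gset q ∪ Lset q) ↔ q ≤ 2 * n) :=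
  GLset_implementable_starReject_rejectReject_general q n hq
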